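/- arXiv:1006.1133 — 3 statements merged into one kernel-verified Lean document; each statement's English description precedes it below -/
import Mathlib

section
/- Let Ω ⊆ ℝ⁴ be open, let φ : Ω → ℝ³ be smooth, and set σ₃(x) = det( Dφ(x) · η♯ · Dφ(x)ᵀ ), where Dφ(x) is the 3×4 Jacobian matrix of φ at x and η♯ = diag(1,1,1,−1). Assume σ₃(x) > 0 on Ω, and let U : Ω → ℝ⁴ be a smooth vector field with η(U(x),U(x)) = −1 and Dφ(x)·U(x) = 0 for all x ∈ Ω. Then the identity Σ_μ ∂_μ U^μ + Σ_μ U^μ ∂_μ ( ln √(σ₃) ) = 0 holds on Ω. -/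
/-!
Let `V^μ = det(e_μ; dφ¹; dφ²; dφ³)` be the Hodge dual of `dφ¹ ∧ dφ² ∧ dφ³`. It is divergence
free, because `∂_μ V^μ` contracts the symmetric Hessians of the `φ^a` against an alternating
form, and it is Euclidean-orthogonal to the rows `dφ^a`, as is `U`; hence `V = h U` with
`h = -η(U, V)`. Writing `P = (η U; Dφ)`, the product `P η♯ Pᵀ` is block diagonal with blocks
`η(U,U) = -1` and `Dφ η♯ Dφᵀ`, so taking determinants gives `h² = σ₃`. Then
`div U = div (V / h) = -U(h) / h = -U(ln |h|) = -U(ln √σ₃)`.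
-/

open scoped BigOperators

noncomputable section

/-- Coefficients of the Minkowski metric `diag(1,1,1,−1)`
(the fourth coordinate, index `3`, is timelike). -/
def etaCoef : Fin 4 → ℝ := fun μ => if μ = 3 then -1 else 1

/-- The Minkowski bilinear form on `ℝ⁴`: `η(v,w) = v₁w₁ + v₂w₂ + v₃w₃ − v₄w₄`. -/
def eta (v w : Fin 4 → ℝ) : ℝ := ∑ μ, etaCoef μ * v μ * w μ

/-- The components `η_{μν} = diag(1,1,1,−1)` of the Minkowski metric. -/
def etaMat (μ ν : Fin 4) : ℝ := if μ = ν then etaCoef μ else 0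

/-- The partial derivative `∂_μ f (x)`. -/
def pd (μ : Fin 4) (f : (Fin 4 → ℝ) → ℝ) (x : Fin 4 → ℝ) : ℝ :=
  fderiv ℝ f x (Pi.single μ 1)

/-- The Minkowski gradient `grad p = (∂₁p, ∂₂p, ∂₃p, −∂₄p)`. -/
def mgrad (p : (Fin 4 → ℝ) → ℝ) (x : Fin 4 → ℝ) : Fin 4 → ℝ :=
  fun ν => etaCoef ν * pd ν p x

/-- The relativistic Euler equations for the triple `(U, ρ, p)` on `Ω`:
`(ρ+p)·Σ_μ U^μ ∂_μ U^ν + (grad p)^ν + η(grad p, U)·U^ν = 0`. -/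
def EulerEqs (Ω : Set (Fin 4 → ℝ)) (U : (Fin 4 → ℝ) → Fin 4 → ℝ)
    (ρ p : (Fin 4 → ℝ) → ℝ) : Prop :=
  ∀ x ∈ Ω, ∀ ν : Fin 4,
    (ρ x + p x) * (∑ μ, U x μ * pd μ (fun y => U y ν) x)
      + mgrad p x ν + eta (mgrad p x) (U x) * U x ν = 0

/-- Conservation of energy along flow lines:
`(ρ+p)·Σ_μ ∂_μ U^μ + Σ_μ U^μ ∂_μ ρ = 0` on `Ω`. -/
def EnergyCons (Ω : Set (Fin 4 → ℝ)) (U : (Fin 4 → ℝ) → Fin 4 → ℝ)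
    (ρ p : (Fin 4 → ℝ) → ℝ) : Prop :=
  ∀ x ∈ Ω,
    (ρ x + p x) * (∑ μ, pd μ (fun y => U y μ) x) + (∑ μ, U x μ * pd μ ρ x) = 0

/-- `σ₃(x) = det( Dφ(x) · η♯ · Dφ(x)ᵀ )`. -/
def sigma3 (φ : (Fin 4 → ℝ) → Fin 3 → ℝ) (x : Fin 4 → ℝ) : ℝ :=
  Matrix.det (Matrix.of fun a b : Fin 3 =>
    ∑ μ, pd μ (fun y => φ y a) x * etaCoef μ * pd μ (fun y => φ y b) x)

open Finset Function Matrix Topology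

theorem AlternatingMap.map_update_update_comm {R ι M N : Type*} [Semiring R] [AddCommMonoid M]
    [Module R M] [AddCommGroup N] [Module R N] [DecidableEq ι] (f : M [⋀^ι]→ₗ[R] N)
    (m : ι → M) {i j : ι} (hij : i ≠ j) (u v : M) :
    f (update (update m i u) j v) = -f (update (update m i v) j u) := by
  rw [← f.map_swap _ hij, Equiv.comp_swap_eq_update]
  congr 1
  rw [update_self, update_of_ne hij, update_self, update_idem, update_comm hij.symm, update_idem]

theorem AlternatingMap.sum_map_update_single_update_eq_zero {ι κ : Type*} [Fintype ι]
    [DecidableEq ι] [DecidableEq κ] (f : (ι → ℝ) [⋀^κ]→ₗ[ℝ] ℝ) (m : κ → ι → ℝ) {i j : κ}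
    (hij : i ≠ j) {w : Matrix ι ι ℝ} (hw : w.IsSymm) :
    ∑ μ, f (update (update m i (Pi.single μ 1)) j (w μ)) = 0 := by
  set S := ∑ μ, ∑ ν, w μ ν * f (update (update m i (Pi.single μ 1)) j (Pi.single ν 1)) with hS
  have hexpand : ∑ μ, f (update (update m i (Pi.single μ 1)) j (w μ)) = S := by
    refine sum_congr rfl fun μ _ => ?_
    conv_lhs => rw [pi_eq_sum_univ' (w μ), f.map_update_sum]
    simp only [f.map_update_smul, smul_eq_mul]
  have hanti : S = -S := calc
    S = ∑ μ, ∑ ν, -(w ν μ * f (update (update m i (Pi.single ν 1)) j (Pi.single μ 1))) := by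
      refine sum_congr rfl fun μ _ => sum_congr rfl fun ν _ => ?_
      rw [f.map_update_update_comm m hij (Pi.single μ 1), hw.apply, mul_neg]
    _ = -S := by rw [sum_comm, hS]; simp only [sum_neg_distrib]
  rw [hexpand]
  linarith

def crossVec {n : ℕ} (g : Fin n → Fin (n + 1) → ℝ) (μ : Fin (n + 1)) : ℝ :=
  (of (Fin.cons (Pi.single μ 1) g : Fin (n + 1) → Fin (n + 1) → ℝ)).det

theorem det_cons_eq_dotProduct_crossVec {n : ℕ} (w : Fin (n + 1) → ℝ)
    (g : Fin n → Fin (n + 1) → ℝ) :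
    (of (Fin.cons w g : Fin (n + 1) → Fin (n + 1) → ℝ)).det = w ⬝ᵥ crossVec g := by
  change detRowAlternating (Fin.cons w g) = _
  conv_lhs => rw [← Fin.update_cons_zero 0, pi_eq_sum_univ' w, AlternatingMap.map_update_sum]
  refine sum_congr rfl fun μ _ => ?_
  rw [AlternatingMap.map_update_smul, Fin.update_cons_zero]
  rfl

theorem dotProduct_crossVec_eq_zero {n : ℕ} (g : Fin n → Fin (n + 1) → ℝ) (a : Fin n) :
    g a ⬝ᵥ crossVec g = 0 := by
  rw [← det_cons_eq_dotProduct_crossVec]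
  exact det_zero_of_row_eq (Fin.succ_ne_zero a).symm rfl

def Matrix.detRowContinuousMultilinear (ι : Type*) [Fintype ι] [DecidableEq ι] :
    ContinuousMultilinearMap ℝ (fun _ : ι => ι → ℝ) ℝ :=
  { (detRowAlternating : (ι → ℝ) [⋀^ι]→ₗ[ℝ] ℝ).toMultilinearMap with
    cont := continuous_id.matrix_det }

theorem hasFDerivAt_crossVec {E : Type*} [NormedAddCommGroup E] [NormedSpace ℝ E] {n : ℕ}
    {G : E → Fin n → Fin (n + 1) → ℝ} {G' : Fin n → E →L[ℝ] (Fin (n + 1) → ℝ)} {x : E}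
    (hG : ∀ a, HasFDerivAt (fun y => G y a) (G' a) x) (μ : Fin (n + 1)) :
    HasFDerivAt (fun y => crossVec (G y) μ)
      (∑ a, ((detRowContinuousMultilinear (Fin (n + 1))).toContinuousLinearMap
        (Fin.cons (Pi.single μ 1) (G x)) a.succ).comp (G' a)) x := by
  have hrows : ∀ i, HasFDerivAt
      (fun y => (Fin.cons (Pi.single μ 1) (G y) : Fin (n + 1) → Fin (n + 1) → ℝ) i)
      ((Fin.cons 0 G' : Fin (n + 1) → E →L[ℝ] (Fin (n + 1) → ℝ)) i) x := by
    refine Fin.cases ?_ fun a => ?_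
    · simp only [Fin.cons_zero]
      exact hasFDerivAt_const _ x
    · simp only [Fin.cons_succ]
      exact hG a
  have h := HasFDerivAt.multilinear_comp (detRowContinuousMultilinear (Fin (n + 1))) hrows
  simp only [Fin.sum_univ_succ, Fin.cons_zero, Fin.cons_succ, ContinuousLinearMap.comp_zero,
    zero_add] at h
  exact h

def jacobianRows {n m : ℕ} (f : Fin n → (Fin m → ℝ) → ℝ) (y : Fin m → ℝ) : Fin n → Fin m → ℝ :=
  fun a ν => fderiv ℝ (f a) y (Pi.single ν 1)

theorem hasFDerivAt_jacobianRows {n m : ℕ} {f : Fin n → (Fin m → ℝ) → ℝ} {x : Fin m → ℝ}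
    {a : Fin n} (hf : ContDiffAt ℝ 2 (f a) x) :
    HasFDerivAt (fun y => jacobianRows f y a)
      ((ContinuousLinearMap.pi fun ν => ContinuousLinearMap.apply ℝ ℝ (Pi.single ν 1)).comp
        (fderiv ℝ (fderiv ℝ (f a)) x)) x := by
  have h2 : DifferentiableAt ℝ (fderiv ℝ (f a)) x :=
    (hf.fderiv_right (m := 1) (by norm_num)).differentiableAt one_ne_zero
  exact (ContinuousLinearMap.pi fun ν => ContinuousLinearMap.apply ℝ ℝ
    (Pi.single ν (1 : ℝ) : Fin m → ℝ)).hasFDerivAt.comp x h2.hasFDerivAt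

theorem sum_fderiv_crossVec_jacobianRows_eq_zero {n : ℕ} {f : Fin n → (Fin (n + 1) → ℝ) → ℝ}
    {x : Fin (n + 1) → ℝ} (hf : ∀ a, ContDiffAt ℝ 2 (f a) x) :
    ∑ μ, fderiv ℝ (fun y => crossVec (jacobianRows f y) μ) x (Pi.single μ 1) = 0 := by
  set w : Fin n → Matrix (Fin (n + 1)) (Fin (n + 1)) ℝ :=
    fun a μ κ => fderiv ℝ (fderiv ℝ (f a)) x (Pi.single μ 1) (Pi.single κ 1)
  have hsymm : ∀ a, (w a).IsSymm := fun a =>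
    IsSymm.ext fun μ κ => (hf a).isSymmSndFDerivAt (by simp) _ _
  calc ∑ μ, fderiv ℝ (fun y => crossVec (jacobianRows f y) μ) x (Pi.single μ 1)
      = ∑ a, ∑ μ, detRowAlternating (update (update (Fin.cons 0 (jacobianRows f x))
          0 (Pi.single μ 1)) a.succ (w a μ)) := by
        rw [sum_comm]
        refine sum_congr rfl fun μ _ => ?_
        rw [(hasFDerivAt_crossVec (fun a => hasFDerivAt_jacobianRows (hf a)) μ).fderiv]
        simp only [_root_.sum_apply, ContinuousLinearMap.comp_apply,
          ContinuousMultilinearMap.toContinuousLinearMap_apply, Fin.update_cons_zero]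
        rfl
    _ = 0 := sum_eq_zero fun a _ => AlternatingMap.sum_map_update_single_update_eq_zero _ _
          (Fin.succ_ne_zero a).symm (hsymm a)

theorem etaCoef_mul_self (μ : Fin 4) : etaCoef μ * etaCoef μ = 1 := by
  unfold etaCoef; split_ifs <;> norm_num

theorem det_diagonal_etaCoef : (diagonal etaCoef).det = -1 := by
  simp [det_diagonal, etaCoef]

theorem eta_eq_dotProduct (u v : Fin 4 → ℝ) : eta u v = (fun μ => etaCoef μ * u μ) ⬝ᵥ v := rfl

theorem mulVec_of_cons {R : Type*} [NonUnitalNonAssocSemiring R] {n m : ℕ} (w : Fin m → R)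
    (g : Fin n → Fin m → R) (v : Fin m → R) :
    of (Fin.cons w g : Fin (n + 1) → Fin m → R) *ᵥ v = Fin.cons (w ⬝ᵥ v) fun a => g a ⬝ᵥ v := by
  ext i
  refine Fin.cases ?_ (fun a => ?_) i <;> rfl

theorem eta_crossVec_sq {g : Fin 3 → Fin 4 → ℝ} {u : Fin 4 → ℝ} (hg : ∀ a, g a ⬝ᵥ u = 0)
    (hu : eta u u = -1) :
    eta u (crossVec g) ^ 2 = (of fun a b => ∑ μ, g a μ * etaCoef μ * g b μ).det := by
  set P := of (Fin.cons (fun μ => etaCoef μ * u μ) g : Fin 4 → Fin 4 → ℝ)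
  set M := P * diagonal etaCoef * Pᵀ with hMdef
  have hM : ∀ i j, M i j = ∑ μ, P i μ * etaCoef μ * P j μ := fun i j => by
    rw [hMdef, mul_apply]
    simp only [mul_diagonal, transpose_apply]
  have hM00 : M 0 0 = -1 := by
    rw [hM, ← hu]
    refine sum_congr rfl fun μ _ => ?_
    simp only [P, of_apply, Fin.cons_zero]
    linear_combination (etaCoef μ * u μ * u μ) * etaCoef_mul_self μ
  have hM0 : ∀ b : Fin 3, M 0 b.succ = 0 := fun b => by
    rw [hM, ← hg b]
    refine sum_congr rfl fun μ _ => ?_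
    simp only [P, of_apply, Fin.cons_zero, Fin.cons_succ]
    linear_combination (g b μ * u μ) * etaCoef_mul_self μ
  have hMdet : M.det = -(of fun a b => ∑ μ, g a μ * etaCoef μ * g b μ).det := by
    rw [det_succ_row_zero, Fin.sum_univ_succ]
    have hminor : M.submatrix Fin.succ Fin.succ =
        of fun a b => ∑ μ, g a μ * etaCoef μ * g b μ := by
      ext a b
      rw [submatrix_apply, hM]
      rfl
    simp [hM00, hM0, hminor]
  have hP : P.det = eta u (crossVec g) := det_cons_eq_dotProduct_crossVec _ _
  rw [det_mul, det_mul, det_transpose, hP, det_diagonal_etaCoef] at hMdet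
  linear_combination -hMdet

/- `P = (η u; g)` sends both `u` and `-crossVec g / η(u, crossVec g)` to `(-1, 0, 0, 0)`, and
`det P = η(u, crossVec g)`. -/
theorem crossVec_eq_smul {g : Fin 3 → Fin 4 → ℝ} {u : Fin 4 → ℝ} (hg : ∀ a, g a ⬝ᵥ u = 0)
    (hu : eta u u = -1) (hc : eta u (crossVec g) ≠ 0) :
    crossVec g = -eta u (crossVec g) • u := by
  set P := of (Fin.cons (fun μ => etaCoef μ * u μ) g : Fin 4 → Fin 4 → ℝ)
  have hP : P.det = eta u (crossVec g) := det_cons_eq_dotProduct_crossVec _ _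
  rw [← sub_eq_zero]
  refine eq_zero_of_mulVec_eq_zero (hP ▸ hc) ?_
  rw [mulVec_of_cons]
  ext i
  refine Fin.cases ?_ (fun a => ?_) i
  · simp [← eta_eq_dotProduct, hu]
  · simp [hg, dotProduct_crossVec_eq_zero]

theorem fderiv_div_add_div_smul_fderiv_log {E : Type*} [NormedAddCommGroup E] [NormedSpace ℝ E]
    {v h : E → ℝ} {x : E} (hv : DifferentiableAt ℝ v x) (hh : DifferentiableAt ℝ h x)
    (hx : h x ≠ 0) :
    fderiv ℝ (fun y => v y / h y) x + (v x / h x) • fderiv ℝ (fun y => Real.log (h y)) x =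
      (h x)⁻¹ • fderiv ℝ v x := by
  have hinv := (hasDerivAt_inv hx).comp_hasFDerivAt x hh.hasFDerivAt
  have hdiv : HasFDerivAt (fun y => v y / h y) _ x := hv.hasFDerivAt.mul hinv
  rw [hdiv.fderiv, (hh.hasFDerivAt.log hx).fderiv]
  ext w
  simp only [_root_.add_apply, _root_.smul_apply, smul_eq_mul]
  field_simp
  ring

theorem Filter.EventuallyEq.pd_eq {f g : (Fin 4 → ℝ) → ℝ} {x : Fin 4 → ℝ} (h : f =ᶠ[𝓝 x] g)
    (μ : Fin 4) : pd μ f x = pd μ g x := by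
  rw [pd, pd, h.fderiv_eq]

theorem sum_pd_add_sum_mul_pd_log_eq_div {U V : (Fin 4 → ℝ) → Fin 4 → ℝ} {h : (Fin 4 → ℝ) → ℝ}
    {x : Fin 4 → ℝ} (hUV : ∀ μ, (fun y => U y μ) =ᶠ[𝓝 x] fun y => V y μ / h y)
    (hV : ∀ μ, DifferentiableAt ℝ (fun y => V y μ) x) (hh : DifferentiableAt ℝ h x)
    (hx : h x ≠ 0) :
    ∑ μ, pd μ (fun y => U y μ) x + ∑ μ, U x μ * pd μ (fun y => Real.log (h y)) x =
      (∑ μ, pd μ (fun y => V y μ) x) / h x := by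
  rw [← sum_add_distrib, sum_div]
  refine sum_congr rfl fun μ _ => ?_
  rw [(hUV μ).pd_eq, (hUV μ).eq_of_nhds]
  simpa [pd, div_eq_inv_mul] using
    congrArg (· (Pi.single μ 1)) (fderiv_div_add_div_smul_fderiv_log (hV μ) hh hx)

/-- for a submersion `φ` with `σ₃ > 0` and unit timelike vertical
vector field `U`, one has `div U + U(ln √σ₃) = 0`. -/
theorem statement6 (Ω : Set (Fin 4 → ℝ)) (hΩ : IsOpen Ω)
    (φ : (Fin 4 → ℝ) → Fin 3 → ℝ) (hφ : ContDiffOn ℝ (⊤ : ℕ∞) φ Ω)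
    (hσ : ∀ x ∈ Ω, 0 < sigma3 φ x)
    (U : (Fin 4 → ℝ) → Fin 4 → ℝ) (hUsm : ContDiffOn ℝ (⊤ : ℕ∞) U Ω)
    (hUnit : ∀ x ∈ Ω, eta (U x) (U x) = -1)
    (hvert : ∀ x ∈ Ω, ∀ a : Fin 3, ∑ μ, pd μ (fun y => φ y a) x * U x μ = 0) :
    ∀ x ∈ Ω,
      (∑ μ, pd μ (fun y => U y μ) x)
        + (∑ μ, U x μ * pd μ (fun y => Real.log (Real.sqrt (sigma3 φ y))) x) = 0 := by
  intro x hx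
  set V := fun y => crossVec (jacobianRows (fun a y => φ y a) y)
  set h := fun y => -eta (U y) (V y)
  have hσh : ∀ y ∈ Ω, sigma3 φ y = h y ^ 2 := fun y hy => by
    rw [neg_sq]; exact (eta_crossVec_sq (hvert y hy) (hUnit y hy)).symm
  have hh0 : ∀ y ∈ Ω, h y ≠ 0 := fun y hy => sq_pos_iff.mp (hσh y hy ▸ hσ y hy)
  have hVU : ∀ y ∈ Ω, V y = h y • U y := fun y hy =>
    crossVec_eq_smul (hvert y hy) (hUnit y hy) (neg_ne_zero.mp (hh0 y hy))
  have hUV : ∀ μ, (fun y => U y μ) =ᶠ[𝓝 x] fun y => V y μ / h y := fun μ => by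
    filter_upwards [hΩ.mem_nhds hx] with y hy
    rw [hVU y hy]
    simp [hh0 y hy]
  have hlog : (fun y => Real.log (Real.sqrt (sigma3 φ y))) =ᶠ[𝓝 x] fun y => Real.log (h y) := by
    filter_upwards [hΩ.mem_nhds hx] with y hy
    rw [hσh y hy, Real.sqrt_sq_eq_abs, Real.log_abs]
  have hφ2 : ∀ a, ContDiffAt ℝ 2 (fun y => φ y a) x := fun a =>
    ((contDiffOn_pi.1 hφ a).contDiffAt (hΩ.mem_nhds hx)).of_le (by norm_cast)
  have hVd : ∀ μ, DifferentiableAt ℝ (fun y => V y μ) x := fun μ =>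
    (hasFDerivAt_crossVec (fun a => hasFDerivAt_jacobianRows (hφ2 a)) μ).differentiableAt
  have hUd : DifferentiableAt ℝ U x := (hUsm.contDiffAt (hΩ.mem_nhds hx)).differentiableAt (by simp)
  have hhd : DifferentiableAt ℝ h x := by simp only [h, eta]; fun_prop
  have hdivV : ∑ μ, pd μ (fun y => V y μ) x = 0 := sum_fderiv_crossVec_jacobianRows_eq_zero hφ2
  simp only [hlog.pd_eq]
  rw [sum_pd_add_sum_mul_pd_log_eq_div hUV hVd hhd (hh0 x hx), hdivV, zero_div]
end
end

section
/- Let Ω = { x ∈ ℝ⁴ : x₄ > √(x₁²+x₂²+x₃²) }, τ(x) = √(x₄² − x₁² − x₂² − x₃²), and U(x) = x / τ(x). Set ω_μ = Σ_α η_{μα}U^α and g^H_{μν} = η_{μν} + ω_μ ω_ν. Then U is shear-free: (ℒ_U g^H)_{μν} = (2/3)·(Σ_α ∂_α U^α)·g^H_{μν} on Ω for all μ, ν, i.e. ℒ_U g^H − (2/3)(div U)·g^H = 0. -/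
open scoped BigOperators

noncomputable section

/-- The interior of the forward light cone in Minkowski `ℝ⁴`. -/
def lightcone : Set (Fin 4 → ℝ) :=
  {x | Real.sqrt ((x 0) ^ 2 + (x 1) ^ 2 + (x 2) ^ 2) < x 3}

/-- `τ(x) = √(x₄² − x₁² − x₂² − x₃²)`. -/
def tau (x : Fin 4 → ℝ) : ℝ :=
  Real.sqrt ((x 3) ^ 2 - (x 0) ^ 2 - (x 1) ^ 2 - (x 2) ^ 2)

/-- The extended Hwa–Bjorken flow vector field `U(x) = x / τ(x)`. -/
def Ubj (x : Fin 4 → ℝ) : Fin 4 → ℝ := fun μ => x μ / tau x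

/-- The η-dual 1-form of `Ubj`: `ω_μ = Σ_α η_{μα} x^α / τ`. -/
def omegaBj (x : Fin 4 → ℝ) : Fin 4 → ℝ := fun μ => etaCoef μ * x μ / tau x

/-- The horizontal (spatial) part of the metric: `g^H = η + ω ⊗ ω`. -/
def gH (x : Fin 4 → ℝ) (μ ν : Fin 4) : ℝ := etaMat μ ν + omegaBj x μ * omegaBj x ν

/-- Componentwise Lie derivative of a symmetric 2-tensor `T` along `U`:
`(ℒ_U T)_{μν} = Σ_α ( U^α ∂_α T_{μν} + ∂_μ U^α · T_{αν} + ∂_ν U^α · T_{μα} )`. -/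
def lieD (U : (Fin 4 → ℝ) → Fin 4 → ℝ) (T : (Fin 4 → ℝ) → Fin 4 → Fin 4 → ℝ)
    (x : Fin 4 → ℝ) (μ ν : Fin 4) : ℝ :=
  ∑ α, (U x α * pd α (fun y => T y μ ν) x
        + pd μ (fun y => U y α) x * T x α ν
        + pd ν (fun y => U y α) x * T x μ α)

/-! With `ω` the `η`-dual of `U`, differentiating `τ² = −η(x,x)` gives `∂_α τ = −ω_α`, hence
`∂_α U^β = (δ^β_α + U^β ω_α)/τ` and `∂_α ω_μ = g^H_{μα}/τ`. Since `Σ_α U^α ω_α = −1`, the tensor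
`g^H` annihilates `U`; so the transport term of `ℒ_U g^H` vanishes and each of the two other
terms contributes `g^H/τ`, giving `ℒ_U g^H = 2 g^H/τ`, while `div U = (4 − 1)/τ = 3/τ`. -/

section PartialDerivative

variable {f g : (Fin 4 → ℝ) → ℝ} {x : Fin 4 → ℝ} {μ : Fin 4}

lemma pd_coord (ν : Fin 4) :
    pd μ (fun y => y ν) x = if ν = μ then 1 else 0 := by
  have h : HasFDerivAt (fun y : Fin 4 → ℝ => y ν) (ContinuousLinearMap.proj ν) x :=
    hasFDerivAt_apply (𝕜 := ℝ) ν x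
  simp [pd, h.fderiv, Pi.single_apply]

lemma pd_const_add (c : ℝ) : pd μ (fun y => c + f y) x = pd μ f x := by
  simp [pd, fderiv_const_add]

lemma pd_const_mul (hf : DifferentiableAt ℝ f x) (c : ℝ) :
    pd μ (fun y => c * f y) x = c * pd μ f x := by
  simp [pd, fderiv_const_mul hf]

lemma pd_sub (hf : DifferentiableAt ℝ f x) (hg : DifferentiableAt ℝ g x) :
    pd μ (fun y => f y - g y) x = pd μ f x - pd μ g x := by
  simp [pd, fderiv_fun_sub hf hg]

lemma pd_mul (hf : DifferentiableAt ℝ f x) (hg : DifferentiableAt ℝ g x) :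
    pd μ (fun y => f y * g y) x = pd μ f x * g x + f x * pd μ g x := by
  simp only [pd, fderiv_fun_mul hf hg, add_apply, smul_apply,
    smul_eq_mul]
  ring

lemma pd_sq (hf : DifferentiableAt ℝ f x) :
    pd μ (fun y => f y ^ 2) x = 2 * f x * pd μ f x := by
  simp [pd, fderiv_fun_pow 2 hf]

lemma pd_inv (hf : DifferentiableAt ℝ f x) (hx : f x ≠ 0) :
    pd μ (fun y => (f y)⁻¹) x = -pd μ f x / f x ^ 2 := by
  have h : HasFDerivAt (fun y => (f y)⁻¹) ((-(f x ^ 2)⁻¹) • fderiv ℝ f x) x :=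
    (hasDerivAt_inv hx).comp_hasFDerivAt x hf.hasFDerivAt
  simp only [pd, h.fderiv, smul_apply, smul_eq_mul]
  ring

lemma pd_div (hf : DifferentiableAt ℝ f x) (hg : DifferentiableAt ℝ g x) (hx : g x ≠ 0) :
    pd μ (fun y => f y / g y) x = (pd μ f x * g x - f x * pd μ g x) / g x ^ 2 := by
  simp only [div_eq_mul_inv]
  rw [pd_mul hf (hg.fun_inv hx), pd_inv hg hx]
  field_simp
  ring

lemma pd_sqrt (hf : DifferentiableAt ℝ f x) (hx : f x ≠ 0) :
    pd μ (fun y => √(f y)) x = pd μ f x / (2 * √(f x)) := by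
  simp only [pd, fderiv_sqrt hf hx, smul_apply, smul_eq_mul]
  ring

end PartialDerivative

section HwaBjorken

variable {x : Fin 4 → ℝ}

lemma tau_pos_of_mem_lightcone (hx : x ∈ lightcone) : 0 < tau x := by
  have h3 : 0 < x 3 := (Real.sqrt_nonneg _).trans_lt hx
  have h := (Real.sqrt_lt' h3).mp hx
  exact Real.sqrt_pos.mpr (by linarith)

lemma tau_sq (ht : 0 < tau x) : tau x ^ 2 = x 3 ^ 2 - x 0 ^ 2 - x 1 ^ 2 - x 2 ^ 2 :=
  Real.sq_sqrt (Real.sqrt_pos.mp ht).le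

lemma differentiableAt_tau (ht : 0 < tau x) : DifferentiableAt ℝ tau x :=
  DifferentiableAt.sqrt (by fun_prop) (Real.sqrt_pos.mp ht).ne'

lemma differentiableAt_Ubj (ht : 0 < tau x) (μ : Fin 4) :
    DifferentiableAt ℝ (fun y => Ubj y μ) x := by
  have := differentiableAt_tau ht
  unfold Ubj
  fun_prop (disch := exact ht.ne')

lemma differentiableAt_omegaBj (ht : 0 < tau x) (μ : Fin 4) :
    DifferentiableAt ℝ (fun y => omegaBj y μ) x := by
  have := differentiableAt_tau ht
  unfold omegaBj
  fun_prop (disch := exact ht.ne')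

lemma pd_tau (ht : 0 < tau x) (α : Fin 4) : pd α tau x = -omegaBj x α := by
  have hQ : pd α (fun y => y 3 ^ 2 - y 0 ^ 2 - y 1 ^ 2 - y 2 ^ 2) x = -2 * etaCoef α * x α := by
    simp (disch := fun_prop) only [pd_sub, pd_sq, pd_coord]
    fin_cases α <;> simp [etaCoef]
  change pd α (fun y => √(y 3 ^ 2 - y 0 ^ 2 - y 1 ^ 2 - y 2 ^ 2)) x = _
  rw [pd_sqrt (by fun_prop) (Real.sqrt_pos.mp ht).ne', hQ]
  change -2 * etaCoef α * x α / (2 * tau x) = -omegaBj x α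
  rw [omegaBj]
  field_simp

lemma pd_Ubj (ht : 0 < tau x) (α β : Fin 4) :
    pd α (fun y => Ubj y β) x = ((if β = α then 1 else 0) + Ubj x β * omegaBj x α) / tau x := by
  change pd α (fun y => y β / tau y) x = _
  rw [pd_div (differentiableAt_apply (𝕜 := ℝ) β x) (differentiableAt_tau ht) ht.ne', pd_coord,
    pd_tau ht, Ubj]
  field_simp
  ring

lemma pd_omegaBj (ht : 0 < tau x) (α μ : Fin 4) :
    pd α (fun y => omegaBj y μ) x = gH x μ α / tau x := by
  have h : (fun y => omegaBj y μ) = fun y => etaCoef μ * Ubj y μ := by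
    ext y
    exact mul_div_assoc _ _ _
  rw [h, pd_const_mul (differentiableAt_Ubj ht μ), pd_Ubj ht]
  simp only [gH, etaMat, omegaBj, Ubj, eq_comm (a := μ)]
  split_ifs <;> ring

lemma pd_gH (ht : 0 < tau x) (α μ ν : Fin 4) :
    pd α (fun y => gH y μ ν) x
      = (gH x μ α * omegaBj x ν + omegaBj x μ * gH x ν α) / tau x := by
  change pd α (fun y => etaMat μ ν + omegaBj y μ * omegaBj y ν) x = _
  rw [pd_const_add, pd_mul (differentiableAt_omegaBj ht μ) (differentiableAt_omegaBj ht ν),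
    pd_omegaBj ht, pd_omegaBj ht]
  ring

lemma gH_comm (x : Fin 4 → ℝ) (μ ν : Fin 4) : gH x μ ν = gH x ν μ := by
  by_cases h : μ = ν
  · rw [h]
  · simp only [gH, etaMat, h, Ne.symm h, if_false, mul_comm]

lemma sum_Ubj_mul_omegaBj (ht : 0 < tau x) : ∑ α, Ubj x α * omegaBj x α = -1 := by
  simp only [Ubj, omegaBj, etaCoef, ite_mul, neg_mul, one_mul, Fin.sum_univ_four,
    Fin.reduceEq, ↓reduceIte]
  field_simp
  linear_combination tau_sq ht

lemma sum_Ubj_mul_gH (ht : 0 < tau x) (ν : Fin 4) : ∑ α, Ubj x α * gH x α ν = 0 := by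
  calc ∑ α, Ubj x α * gH x α ν
      = Ubj x ν * etaCoef ν + (∑ α, Ubj x α * omegaBj x α) * omegaBj x ν := by
        simp only [gH, etaMat, mul_add, mul_ite, mul_zero, Finset.sum_add_distrib,
          Finset.sum_ite_eq', Finset.mem_univ, if_true, ← mul_assoc, ← Finset.sum_mul]
    _ = 0 := by
        rw [sum_Ubj_mul_omegaBj ht, Ubj, omegaBj]
        ring

lemma sum_Ubj_mul_pd_gH (ht : 0 < tau x) (μ ν : Fin 4) :
    ∑ α, Ubj x α * pd α (fun y => gH y μ ν) x = 0 := by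
  have h : ∀ α, Ubj x α * pd α (fun y => gH y μ ν) x
      = (omegaBj x ν * (Ubj x α * gH x α μ) + omegaBj x μ * (Ubj x α * gH x α ν)) / tau x := by
    intro α
    rw [pd_gH ht, gH_comm x μ α, gH_comm x ν α]
    ring
  rw [Finset.sum_congr rfl fun α _ => h α, ← Finset.sum_div, Finset.sum_add_distrib,
    ← Finset.mul_sum, ← Finset.mul_sum, sum_Ubj_mul_gH ht, sum_Ubj_mul_gH ht]
  simp

lemma sum_pd_Ubj_mul_gH (ht : 0 < tau x) (μ ν : Fin 4) :
    ∑ α, pd μ (fun y => Ubj y α) x * gH x α ν = gH x μ ν / tau x := by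
  have h : ∀ α, pd μ (fun y => Ubj y α) x * gH x α ν
      = ((if α = μ then gH x α ν else 0) + omegaBj x μ * (Ubj x α * gH x α ν)) / tau x := by
    intro α
    rw [pd_Ubj ht]
    split_ifs <;> ring
  rw [Finset.sum_congr rfl fun α _ => h α, ← Finset.sum_div, Finset.sum_add_distrib,
    Finset.sum_ite_eq', ← Finset.mul_sum, sum_Ubj_mul_gH ht]
  simp

lemma lieD_Ubj_gH (ht : 0 < tau x) (μ ν : Fin 4) :
    lieD Ubj gH x μ ν = 2 * gH x μ ν / tau x := by
  have h : ∑ α, pd ν (fun y => Ubj y α) x * gH x μ α = gH x μ ν / tau x := by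
    simp only [gH_comm x μ]
    exact sum_pd_Ubj_mul_gH ht ν μ
  rw [lieD, Finset.sum_add_distrib, Finset.sum_add_distrib, sum_Ubj_mul_pd_gH ht,
    sum_pd_Ubj_mul_gH ht, h]
  ring

lemma sum_pd_Ubj (ht : 0 < tau x) : ∑ α, pd α (fun y => Ubj y α) x = 3 / tau x := by
  simp only [pd_Ubj ht, if_true]
  rw [← Finset.sum_div, Finset.sum_add_distrib, sum_Ubj_mul_omegaBj ht]
  norm_num

end HwaBjorken

/-- the extended Hwa–Bjorken flow `U = x/τ` is shear-free:
`ℒ_U g^H = (2/3)(div U)·g^H`. -/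
theorem statement9 :
    ∀ x ∈ lightcone, ∀ μ ν : Fin 4,
      lieD Ubj gH x μ ν
        = (2 / 3) * (∑ α, pd α (fun y => Ubj y α) x) * gH x μ ν := by
  intro x hx μ ν
  have ht := tau_pos_of_mem_lightcone hx
  rw [lieD_Ubj_gH ht, sum_pd_Ubj ht]
  field_simp
end
end

section
/- Fix q > 0 and let Ω = { x ∈ ℝ⁴ : x₁² + x₂² < 1/q² }. Define U(x) = ( −q x₂, q x₁, 0, 1 ) / √(1 − q²(x₁²+x₂²)), ρ(x) = 1 − q²(x₁²+x₂²) and p = −ρ/3. Then η(U,U) = −1 and Σ_μ ∂_μ U^μ = 0 on Ω, and the triple (U, ρ, p) satisfies both the relativistic Euler equations and the energy conservation equation along flow lines on Ω. (Skew projection's flow, Example 3.4.) -/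
open scoped BigOperators

noncomputable section

/-- The open solid cylinder `x₁² + x₂² < 1/q²`. -/
def cylSet (q : ℝ) : Set (Fin 4 → ℝ) := {x | (x 0) ^ 2 + (x 1) ^ 2 < 1 / q ^ 2}

/-- The skew projection flow
`U(x) = (−q x₂, q x₁, 0, 1)/√(1 − q²(x₁² + x₂²))`. -/
def Uskew (q : ℝ) (x : Fin 4 → ℝ) : Fin 4 → ℝ := fun ν =>
  (if ν = 0 then -q * x 1 else if ν = 1 then q * x 0 else if ν = 3 then 1 else 0) /
    Real.sqrt (1 - q ^ 2 * ((x 0) ^ 2 + (x 1) ^ 2))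

/-- `ρ(x) = 1 − q²(x₁² + x₂²)`. -/
def rhoSkew (q : ℝ) (x : Fin 4 → ℝ) : ℝ := 1 - q ^ 2 * ((x 0) ^ 2 + (x 1) ^ 2)

/-!
Write `U = (J x + e₄)/√ρ`, where `J = rotGen q` generates the rotations of angular velocity `q`
in the `x₁x₂`-plane. Both `ρ` and the normalisation depend on `x` only through `x₁² + x₂²`, and `J x`
is orthogonal to `(x₁, x₂)`; hence `U·∇ρ = 0`, the divergence reduces to the trace of `J`, which
is zero, and `η(grad p, U) = 0`. The acceleration `U·∇U = J²x/ρ = −q²(x₁, x₂, 0, 0)/ρ` is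
centripetal, and since `ρ + p = 2ρ/3` it is balanced exactly by `grad p = (2q²/3)(x₁, x₂, 0, 0)`.
-/

open ContinuousLinearMap

lemma sum_mul_pd (f : (Fin 4 → ℝ) → ℝ) (x v : Fin 4 → ℝ) :
    ∑ μ, v μ * pd μ f x = fderiv ℝ f x v := by
  conv_rhs => rw [← Finset.univ_sum_single v]
  simp only [map_sum, pd]
  refine Finset.sum_congr rfl fun μ _ => ?_
  rw [← smul_eq_mul, ← map_smul, ← Pi.single_smul, smul_eq_mul, mul_one]

lemma eta_mgrad (f : (Fin 4 → ℝ) → ℝ) (x v : Fin 4 → ℝ) :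
    eta (mgrad f x) v = fderiv ℝ f x v := by
  rw [← sum_mul_pd]
  refine Finset.sum_congr rfl fun μ _ => ?_
  have hsq : etaCoef μ * etaCoef μ = 1 := by unfold etaCoef; split_ifs <;> norm_num
  simp only [mgrad]
  linear_combination (v μ * pd μ f x) * hsq

lemma HasFDerivAt.fderiv_apply_coord {U : (Fin 4 → ℝ) → Fin 4 → ℝ}
    {U' : (Fin 4 → ℝ) →L[ℝ] Fin 4 → ℝ} {x : Fin 4 → ℝ} (h : HasFDerivAt U U' x) (ν : Fin 4)
    (v : Fin 4 → ℝ) : fderiv ℝ (fun y => U y ν) x v = U' v ν :=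
  congrArg (· v) ((hasFDerivAt_apply ν (U x)).comp x h).fderiv

def rotGen (q : ℝ) : (Fin 4 → ℝ) →L[ℝ] Fin 4 → ℝ := pi ![-q • proj 1, q • proj 0, 0, 0]

def radialForm (x : Fin 4 → ℝ) : (Fin 4 → ℝ) →L[ℝ] ℝ := x 0 • proj 0 + x 1 • proj 1

@[simp] lemma rotGen_apply (q : ℝ) (v : Fin 4 → ℝ) :
    rotGen q v = ![-q * v 1, q * v 0, 0, 0] := by
  ext ν; fin_cases ν <;> simp [rotGen]

@[simp] lemma radialForm_apply (x v : Fin 4 → ℝ) :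
    radialForm x v = x 0 * v 0 + x 1 * v 1 := by
  simp [radialForm]

section SkewFlow

variable {q : ℝ} {x : Fin 4 → ℝ}

lemma rhoSkew_pos_of_mem_cylSet (hx : x ∈ cylSet q) : 0 < rhoSkew q x := by
  have hx : x 0 ^ 2 + x 1 ^ 2 < 1 / q ^ 2 := hx
  rcases eq_or_ne q 0 with rfl | hq
  -- `1 / 0 = 0`, so `cylSet 0` is empty
  · nlinarith [sq_nonneg (x 0), sq_nonneg (x 1)]
  · rw [lt_div_iff₀ (pow_two_pos_of_ne_zero hq)] at hx
    unfold rhoSkew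
    linarith

variable (q x) in
lemma Uskew_eq_smul : Uskew q x = (√(rhoSkew q x))⁻¹ • (rotGen q x + ![0, 0, 0, 1]) := by
  ext ν; fin_cases ν <;> simp [Uskew, rhoSkew, div_eq_inv_mul]

variable (q x) in
lemma radialForm_Uskew : radialForm x (Uskew q x) = 0 := by
  simp [Uskew_eq_smul]; ring

variable (q x) in
lemma hasFDerivAt_rhoSkew : HasFDerivAt (rhoSkew q) (-(2 * q ^ 2) • radialForm x) x := by
  have h0 : HasFDerivAt (fun y : Fin 4 → ℝ => y 0) (proj 0 : (Fin 4 → ℝ) →L[ℝ] ℝ) x :=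
    hasFDerivAt_apply 0 x
  have h1 : HasFDerivAt (fun y : Fin 4 → ℝ => y 1) (proj 1 : (Fin 4 → ℝ) →L[ℝ] ℝ) x :=
    hasFDerivAt_apply 1 x
  refine (((h0.pow 2).add (h1.pow 2)).const_mul (q ^ 2) |>.const_sub 1).congr_fderiv ?_
  ext v; simp; ring

variable (q x) in
lemma hasFDerivAt_pressure :
    HasFDerivAt (fun y => -(rhoSkew q y) / 3) ((2 * q ^ 2 / 3) • radialForm x) x := by
  have h := (hasFDerivAt_rhoSkew q x).fun_neg.mul_const (3⁻¹ : ℝ)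
  simp only [← div_eq_mul_inv] at h
  refine h.congr_fderiv ?_
  ext v
  simp only [smul_neg, neg_apply, smul_apply, radialForm_apply, smul_eq_mul]
  ring

lemma hasFDerivAt_inv_sqrt_rhoSkew (hx : 0 < rhoSkew q x) :
    HasFDerivAt (fun y => (√(rhoSkew q y))⁻¹)
      ((q ^ 2 / (rhoSkew q x * √(rhoSkew q x))) • radialForm x) x := by
  have hs : 0 < √(rhoSkew q x) := Real.sqrt_pos.mpr hx
  refine ((hasDerivAt_inv hs.ne').comp_hasFDerivAt x
    ((hasFDerivAt_rhoSkew q x).sqrt hx.ne')).congr_fderiv ?_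
  ext v
  simp [Real.sq_sqrt hx.le]
  field_simp

lemma hasFDerivAt_Uskew (hx : 0 < rhoSkew q x) :
    HasFDerivAt (Uskew q) ((√(rhoSkew q x))⁻¹ • rotGen q +
      ((q ^ 2 / rhoSkew q x) • radialForm x).smulRight (Uskew q x)) x := by
  have hV : HasFDerivAt (fun y => rotGen q y + ![0, 0, 0, 1]) (rotGen q) x :=
    (rotGen q).hasFDerivAt.add_const _
  rw [show Uskew q = _ from funext (Uskew_eq_smul q)]
  refine ((hasFDerivAt_inv_sqrt_rhoSkew hx).smul hV).congr_fderiv ?_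
  have hs : 0 < √(rhoSkew q x) := Real.sqrt_pos.mpr hx
  ext v ν
  simp
  field_simp

lemma eta_Uskew_self (hx : 0 < rhoSkew q x) : eta (Uskew q x) (Uskew q x) = -1 := by
  have hs : 0 < √(rhoSkew q x) := Real.sqrt_pos.mpr hx
  simp [eta, Fin.sum_univ_four, etaCoef, Uskew_eq_smul]
  field_simp
  rw [Real.sq_sqrt hx.le, rhoSkew]
  ring

lemma sum_pd_Uskew (hx : 0 < rhoSkew q x) : ∑ μ, pd μ (fun y => Uskew q y μ) x = 0 := by
  simp only [pd, (hasFDerivAt_Uskew hx).fderiv_apply_coord, Fin.sum_univ_four]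
  have h := radialForm_Uskew q x
  rw [radialForm_apply] at h
  simp
  linear_combination (q ^ 2 / rhoSkew q x) * h

lemma sum_Uskew_mul_pd_Uskew (hx : 0 < rhoSkew q x) (ν : Fin 4) :
    ∑ μ, Uskew q x μ * pd μ (fun y => Uskew q y ν) x =
      -(q ^ 2 / rhoSkew q x) * radialForm x (Pi.single ν 1) := by
  rw [sum_mul_pd, (hasFDerivAt_Uskew hx).fderiv_apply_coord]
  simp only [add_apply, smul_apply, smulRight_apply, radialForm_Uskew, smul_zero, zero_smul,
    add_zero]
  have hs : 0 < √(rhoSkew q x) := Real.sqrt_pos.mpr hx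
  fin_cases ν <;> simp [Uskew_eq_smul] <;> field_simp <;> rw [Real.sq_sqrt hx.le] <;> ring

end SkewFlow

theorem statement14_general (q : ℝ) :
    (∀ x ∈ cylSet q, eta (Uskew q x) (Uskew q x) = -1) ∧
    (∀ x ∈ cylSet q, ∑ μ, pd μ (fun y => Uskew q y μ) x = 0) ∧
    EulerEqs (cylSet q) (Uskew q) (rhoSkew q) (fun x => -(rhoSkew q x) / 3) ∧
    EnergyCons (cylSet q) (Uskew q) (rhoSkew q) (fun x => -(rhoSkew q x) / 3) := by
  refine ⟨fun x hx => eta_Uskew_self (rhoSkew_pos_of_mem_cylSet hx),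
    fun x hx => sum_pd_Uskew (rhoSkew_pos_of_mem_cylSet hx), ?euler, ?energy⟩
  case euler =>
    intro x hx ν
    rw [sum_Uskew_mul_pd_Uskew (rhoSkew_pos_of_mem_cylSet hx), eta_mgrad,
      (hasFDerivAt_pressure q x).fderiv]
    simp only [mgrad, pd, (hasFDerivAt_pressure q x).fderiv, smul_apply, radialForm_Uskew]
    have hρ := (rhoSkew_pos_of_mem_cylSet hx).ne'
    fin_cases ν <;> simp [etaCoef] <;> field_simp <;> ring
  case energy =>
    intro x hx
    rw [sum_pd_Uskew (rhoSkew_pos_of_mem_cylSet hx), sum_mul_pd,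
      (hasFDerivAt_rhoSkew q x).fderiv]
    simp only [smul_apply, radialForm_Uskew, mul_zero, smul_zero, add_zero]

/-- the skew projection's flow with `ρ = 1 − q²(x₁²+x₂²)` and
`p = −ρ/3` is a unit, divergence-free perfect fluid flow solving the
relativistic Euler equations and the energy conservation equation. -/
theorem statement14 (q : ℝ) (hq : 0 < q) :
    (∀ x ∈ cylSet q, eta (Uskew q x) (Uskew q x) = -1) ∧
    (∀ x ∈ cylSet q, ∑ μ, pd μ (fun y => Uskew q y μ) x = 0) ∧
    EulerEqs (cylSet q) (Uskew q) (rhoSkew q) (fun x => -(rhoSkew q x) / 3) ∧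
    EnergyCons (cylSet q) (Uskew q) (rhoSkew q) (fun x => -(rhoSkew q x) / 3) :=
  statement14_general q
end
end
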